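/- Dual step bound in the linear case (Remark 5.3 / r:lin). Let F ∈ ℝ^{m×n} be a matrix with λ_min(FFᵀ) > 0 and set γ := √(λ_min(FFᵀ)). Let f₀ : ℝ^n → ℝ be differentiable with L₀-Lipschitz gradient on ℝ^n. Let x⁻, x, x⁺ ∈ ℝ^n and y, y⁺ ∈ ℝ^m and b > 0 satisfy ‖∇f₀(x⁺) + Fᵀ y⁺‖ ≤ b‖x⁺ − x‖ and ‖∇f₀(x) + Fᵀ y‖ ≤ b‖x − x⁻‖. Then ‖y⁺ − y‖² ≤ d₁‖x⁺ − x‖² + d₂‖x − x⁻‖², where d₁ = 2(L₀ + b)²/λ_min(FFᵀ) and d₂ = 2b²/λ_min(FFᵀ). -/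

import Mathlib

/-!
Put `v = y⁺ - y`. Subtracting the two residuals `∇f₀(x⁺) + Fᵀy⁺` and `∇f₀(x) + Fᵀy` and
using the Lipschitz bound on `∇f₀` gives `‖Fᵀv‖ ≤ (L₀ + b)‖x⁺ - x‖ + b‖x - x⁻‖`. On the other
hand `‖Fᵀv‖² = ⟪v, FFᵀv⟫ ≥ λ_min(FFᵀ)‖v‖²` by the Rayleigh bound, and `(p + q)² ≤ 2p² + 2q²`
finishes the proof.
-/

/-- Matrix–vector multiplication, with Euclidean norms on both sides. -/
noncomputable def mulVecE {m n : ℕ} (A : Matrix (Fin m) (Fin n) ℝ)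
    (v : EuclideanSpace ℝ (Fin n)) : EuclideanSpace ℝ (Fin m) :=
  WithLp.toLp 2 (A.mulVec v)

open scoped MatrixOrder InnerProductSpace

section Rayleigh

variable {ι 𝕜 : Type*} [Fintype ι] [DecidableEq ι] [RCLike 𝕜] {M : Matrix ι ι 𝕜}

theorem Matrix.IsHermitian.algebraMap_le_of_le_eigenvalues (hM : M.IsHermitian) {c : ℝ}
    (hc : ∀ i, c ≤ hM.eigenvalues i) : algebraMap ℝ (Matrix ι ι 𝕜) c ≤ M := by
  refine algebraMap_le_of_le_spectrum ?_ hM.isSelfAdjoint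
  rw [hM.spectrum_real_eq_range_eigenvalues]
  rintro _ ⟨i, rfl⟩
  exact hc i

theorem Matrix.IsHermitian.mul_norm_sq_le_re_inner_toEuclideanLin (hM : M.IsHermitian)
    {c : ℝ} (hc : ∀ i, c ≤ hM.eigenvalues i) (v : EuclideanSpace 𝕜 ι) :
    c * ‖v‖ ^ 2 ≤ RCLike.re ⟪v, Matrix.toEuclideanLin M v⟫_𝕜 := by
  have hpos := Matrix.isPositive_toEuclideanLin_iff.2 (hM.algebraMap_le_of_le_eigenvalues hc)
  have hscalar : Matrix.toEuclideanLin (algebraMap ℝ (Matrix ι ι 𝕜) c) v = c • v := by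
    ext i
    simp [Algebra.algebraMap_eq_smul_one, Matrix.toLpLin_apply, Matrix.smul_mulVec]
  have h := hpos.re_inner_nonneg_right v
  rwa [map_sub, LinearMap.sub_apply, inner_sub_right, map_sub, sub_nonneg, hscalar,
    inner_smul_right_eq_smul, RCLike.smul_re, inner_self_eq_norm_sq] at h

end Rayleigh

theorem mulVecE_sub {m n : ℕ} (A : Matrix (Fin m) (Fin n) ℝ) (v w : EuclideanSpace ℝ (Fin n)) :
    mulVecE A (v - w) = mulVecE A v - mulVecE A w :=
  map_sub (Matrix.toEuclideanLin A) v w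

theorem norm_mulVecE_transpose_sq {m n : ℕ} (A : Matrix (Fin m) (Fin n) ℝ)
    (w : EuclideanSpace ℝ (Fin m)) :
    ‖mulVecE A.transpose w‖ ^ 2 = ⟪w, Matrix.toEuclideanLin (A * A.transpose) w⟫_ℝ := by
  have hadj : Matrix.toEuclideanLin A.transpose = (Matrix.toEuclideanLin A).adjoint := by
    rw [← Matrix.conjTranspose_eq_transpose_of_trivial,
      Matrix.toEuclideanLin_conjTranspose_eq_adjoint]
  rw [Matrix.toLpLin_mul_same, LinearMap.comp_apply, ← LinearMap.adjoint_inner_left, ← hadj,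
    real_inner_self_eq_norm_sq]
  rfl

theorem mul_norm_sq_le_norm_mulVecE_transpose_sq {m n : ℕ} {A : Matrix (Fin m) (Fin n) ℝ}
    (hH : (A * A.transpose).IsHermitian) {c : ℝ} (hc : ∀ i, c ≤ hH.eigenvalues i)
    (w : EuclideanSpace ℝ (Fin m)) : c * ‖w‖ ^ 2 ≤ ‖mulVecE A.transpose w‖ ^ 2 := by
  rw [norm_mulVecE_transpose_sq]
  exact hH.mul_norm_sq_le_re_inner_toEuclideanLin hc w

theorem norm_sub_le_norm_add_add_norm_add_add_norm_sub {E : Type*} [SeminormedAddCommGroup E]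
    (g g' u u' : E) : ‖u - u'‖ ≤ ‖g + u‖ + ‖g' + u'‖ + ‖g - g'‖ := by
  calc ‖u - u'‖ = ‖((g + u) - (g' + u')) - (g - g')‖ := by congr 1; abel
    _ ≤ ‖(g + u) - (g' + u')‖ + ‖g - g'‖ := norm_sub_le _ _
    _ ≤ ‖g + u‖ + ‖g' + u'‖ + ‖g - g'‖ := by gcongr; exact norm_sub_le _ _

theorem dual_step_bound_linear_general {n m : ℕ}
    (A : Matrix (Fin m) (Fin n) ℝ)
    (hH : (A * A.transpose).IsHermitian)
    (lammin : ℝ) (hlam : lammin = ⨅ i, hH.eigenvalues i) (hpos : 0 < lammin)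
    (f₀ : EuclideanSpace ℝ (Fin n) → ℝ)
    (L₀ b : ℝ)
    (hL0 : ∀ x x' : EuclideanSpace ℝ (Fin n),
      ‖gradient f₀ x - gradient f₀ x'‖ ≤ L₀ * ‖x - x'‖)
    (xm x xp : EuclideanSpace ℝ (Fin n)) (y yp : EuclideanSpace ℝ (Fin m))
    (h1 : ‖gradient f₀ xp + mulVecE A.transpose yp‖ ≤ b * ‖xp - x‖)
    (h2 : ‖gradient f₀ x + mulVecE A.transpose y‖ ≤ b * ‖x - xm‖) :
    ‖yp - y‖ ^ 2 ≤ (2 * (L₀ + b) ^ 2 / lammin) * ‖xp - x‖ ^ 2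
      + (2 * b ^ 2 / lammin) * ‖x - xm‖ ^ 2 := by
  have hle : ∀ i, lammin ≤ hH.eigenvalues i := fun i =>
    hlam ▸ ciInf_le (Finite.bddBelow_range _) i
  have hdual : ‖mulVecE A.transpose (yp - y)‖ ≤ (L₀ + b) * ‖xp - x‖ + b * ‖x - xm‖ := by
    rw [mulVecE_sub]
    linarith [norm_sub_le_norm_add_add_norm_add_add_norm_sub (gradient f₀ xp) (gradient f₀ x)
      (mulVecE A.transpose yp) (mulVecE A.transpose y), hL0 xp x]
  have hsq : lammin * ‖yp - y‖ ^ 2 ≤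
      2 * (L₀ + b) ^ 2 * ‖xp - x‖ ^ 2 + 2 * b ^ 2 * ‖x - xm‖ ^ 2 :=
    calc lammin * ‖yp - y‖ ^ 2 ≤ ‖mulVecE A.transpose (yp - y)‖ ^ 2 :=
          mul_norm_sq_le_norm_mulVecE_transpose_sq hH hle _
      _ ≤ ((L₀ + b) * ‖xp - x‖ + b * ‖x - xm‖) ^ 2 := by gcongr
      _ ≤ 2 * (((L₀ + b) * ‖xp - x‖) ^ 2 + (b * ‖x - xm‖) ^ 2) := add_sq_le
      _ = 2 * (L₀ + b) ^ 2 * ‖xp - x‖ ^ 2 + 2 * b ^ 2 * ‖x - xm‖ ^ 2 := by ring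
  rw [div_mul_eq_mul_div, div_mul_eq_mul_div, ← add_div, le_div_iff₀ hpos]
  linarith

/-- **Dual step bound in the linear case** (Remark 5.3). For a matrix `F` with
`λ_min(FFᵀ) > 0` and `∇f₀` globally `L₀`-Lipschitz, the gradient bounds
`‖∇f₀(x⁺) + Fᵀy⁺‖ ≤ b‖x⁺ − x‖`, `‖∇f₀(x) + Fᵀy‖ ≤ b‖x − x⁻‖` imply
`‖y⁺ − y‖² ≤ d₁‖x⁺ − x‖² + d₂‖x − x⁻‖²` with `d₁ = 2(L₀+b)²/λ_min(FFᵀ)` and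
`d₂ = 2b²/λ_min(FFᵀ)`. -/
theorem dual_step_bound_linear {n m : ℕ}
    (A : Matrix (Fin m) (Fin n) ℝ)
    (hH : (A * A.transpose).IsHermitian)
    (lammin : ℝ) (hlam : lammin = ⨅ i, hH.eigenvalues i) (hpos : 0 < lammin)
    (f₀ : EuclideanSpace ℝ (Fin n) → ℝ) (hdiff : Differentiable ℝ f₀)
    (L₀ b : ℝ) (hb : 0 < b)
    (hL0 : ∀ x x' : EuclideanSpace ℝ (Fin n),
      ‖gradient f₀ x - gradient f₀ x'‖ ≤ L₀ * ‖x - x'‖)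
    (xm x xp : EuclideanSpace ℝ (Fin n)) (y yp : EuclideanSpace ℝ (Fin m))
    (h1 : ‖gradient f₀ xp + mulVecE A.transpose yp‖ ≤ b * ‖xp - x‖)
    (h2 : ‖gradient f₀ x + mulVecE A.transpose y‖ ≤ b * ‖x - xm‖) :
    ‖yp - y‖ ^ 2 ≤ (2 * (L₀ + b) ^ 2 / lammin) * ‖xp - x‖ ^ 2
      + (2 * b ^ 2 / lammin) * ‖x - xm‖ ^ 2 :=
  dual_step_bound_linear_general A hH lammin hlam hpos f₀ L₀ b hL0 xm x xp y yp h1 h2
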